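/- arXiv:2602.03445 — 3 statements merged into one kernel-verified Lean document; each statement's English description precedes it below -/
import Mathlib

section
/- Performance Difference Lemma (finite MDP): for any two policies π and π' on a finite MDP with discount γ ∈ [0,1), the difference in expected discounted return from a fixed initial state distribution satisfies J(π') − J(π) = (1/(1−γ)) · Σ_s d^{π'}(s) · Σ_a π'(a|s) · A^π(s,a), where d^{π'} is the normalized discounted state occupancy of π' and A^π(s,a) = Q^π(s,a) − V^π(s) is the advantage of π. -/
/-- Performance Difference Lemma on a finite MDP. `V` is the value function of `π`
(characterized by its Bellman equation), `V'` that of `π'`, and `d'` is the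
normalized discounted occupancy of `π'` (characterized by its fixed-point
equation). Then
`J(π') - J(π) = (1/(1-γ)) * ∑ s, d' s * ∑ a, π' s a * A^π(s,a)` where
`A^π(s,a) = Q^π(s,a) - V s` and `Q^π(s,a) = r s a + γ * ∑ s', P s a s' * V s'`. -/
theorem performance_difference_lemma {S A : Type*} [Fintype S] [Fintype A]
    (P : S → A → S → ℝ) (r : S → A → ℝ) (γ : ℝ) (μ : S → ℝ)
    (π π' : S → A → ℝ) (V V' d' : S → ℝ)
    (hγ0 : 0 ≤ γ) (hγ1 : γ < 1)
    (hP0 : ∀ s a s', 0 ≤ P s a s') (hP1 : ∀ s a, ∑ s', P s a s' = 1)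
    (hμ0 : ∀ s, 0 ≤ μ s) (hμ1 : ∑ s, μ s = 1)
    (hπ0 : ∀ s a, 0 ≤ π s a) (hπ1 : ∀ s, ∑ a, π s a = 1)
    (hπ'0 : ∀ s a, 0 ≤ π' s a) (hπ'1 : ∀ s, ∑ a, π' s a = 1)
    (hV : ∀ s, V s = ∑ a, π s a * (r s a + γ * ∑ s', P s a s' * V s'))
    (hV' : ∀ s, V' s = ∑ a, π' s a * (r s a + γ * ∑ s', P s a s' * V' s'))
    (hd' : ∀ s, d' s = (1 - γ) * μ s
        + γ * ∑ s'', ∑ a, d' s'' * π' s'' a * P s'' a s) :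
    (∑ s, μ s * V' s) - (∑ s, μ s * V s) =
      (1 / (1 - γ)) * ∑ s, d' s *
        ∑ a, π' s a * ((r s a + γ * ∑ s', P s a s' * V s') - V s) := by
  have hγ : (1 : ℝ) - γ ≠ 0 := by linarith
  -- inner advantage rewrite
  have hinner : ∀ s, ∑ a, π' s a * ((r s a + γ * ∑ s', P s a s' * V s') - V s)
      = (V' s - V s) - γ * ∑ a, π' s a * ∑ s', P s a s' * (V' s' - V s') := by
    intro s
    have step : ∀ a ∈ Finset.univ (α := A),
        π' s a * ((r s a + γ * ∑ s', P s a s' * V s') - V s)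
        = π' s a * (r s a + γ * ∑ s', P s a s' * V' s')
          - π' s a * V s
          - γ * (π' s a * ∑ s', P s a s' * (V' s' - V s')) := by
      intro a _
      have h : (∑ s', P s a s' * V' s') - ∑ s', P s a s' * (V' s' - V s')
          = ∑ s', P s a s' * V s' := by
        rw [← Finset.sum_sub_distrib]
        exact Finset.sum_congr rfl fun _ _ => by ring
      linear_combination (-(γ * π' s a)) * h
    rw [Finset.sum_congr rfl step, Finset.sum_sub_distrib, Finset.sum_sub_distrib,
      ← hV' s, ← Finset.sum_mul, hπ'1 s, one_mul, ← Finset.mul_sum]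
  -- key identity
  have key : (∑ s, d' s * ∑ a, π' s a * ((r s a + γ * ∑ s', P s a s' * V s') - V s))
      = (1 - γ) * ∑ s, μ s * (V' s - V s) := by
    have expand : (∑ s, d' s * ∑ a, π' s a * ((r s a + γ * ∑ s', P s a s' * V s') - V s))
        = (∑ s, d' s * (V' s - V s))
          - γ * ∑ s, ∑ a, ∑ s', d' s * π' s a * P s a s' * (V' s' - V s') := by
      rw [Finset.mul_sum]
      rw [← Finset.sum_sub_distrib]
      refine Finset.sum_congr rfl fun s _ => ?_
      rw [hinner s]
      have : ∑ a, ∑ s', d' s * π' s a * P s a s' * (V' s' - V s')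
          = d' s * ∑ a, π' s a * ∑ s', P s a s' * (V' s' - V s') := by
        rw [Finset.mul_sum]
        refine Finset.sum_congr rfl fun a _ => ?_
        rw [Finset.mul_sum, Finset.mul_sum]
        exact Finset.sum_congr rfl fun s' _ => by ring
      rw [this]; ring
    rw [expand]
    have swap : (∑ s, ∑ a, ∑ s', d' s * π' s a * P s a s' * (V' s' - V s'))
        = ∑ s', (∑ s, ∑ a, d' s * π' s a * P s a s') * (V' s' - V s') := by
      rw [show (∑ s, ∑ a, ∑ s', d' s * π' s a * P s a s' * (V' s' - V s'))
          = ∑ s, ∑ s', ∑ a, d' s * π' s a * P s a s' * (V' s' - V s')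
        from Finset.sum_congr rfl fun s _ => Finset.sum_comm]
      rw [Finset.sum_comm]
      refine Finset.sum_congr rfl fun s' _ => ?_
      rw [Finset.sum_mul]
      refine Finset.sum_congr rfl fun s _ => ?_
      rw [Finset.sum_mul]
    rw [swap]
    have hocc : ∀ s', γ * (∑ s, ∑ a, d' s * π' s a * P s a s')
        = d' s' - (1 - γ) * μ s' := by
      intro s'
      have := hd' s'
      linarith [this]
    have final : (∑ s, d' s * (V' s - V s))
        - γ * ∑ s', (∑ s, ∑ a, d' s * π' s a * P s a s') * (V' s' - V s')
        = (1 - γ) * ∑ s, μ s * (V' s - V s) := by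
      rw [Finset.mul_sum, Finset.mul_sum, ← Finset.sum_sub_distrib]
      refine Finset.sum_congr rfl fun s' _ => ?_
      have h := hocc s'
      linear_combination (-(V' s' - V s')) * h
    exact final
  rw [key]
  rw [← Finset.sum_sub_distrib]
  have : ∀ s ∈ Finset.univ (α := S), μ s * V' s - μ s * V s = μ s * (V' s - V s) :=
    fun s _ => by ring
  rw [Finset.sum_congr rfl this]
  field_simp
end

section
/- Occupancy measure difference bound: for any two stationary policies π and π' on a finite MDP with discount γ ∈ [0,1), the ℓ1 distance between their normalized discounted state occupancy measures satisfies ‖d^{π'} − d^{π}‖_1 ≤ (2γ/(1−γ)) · E_{s∼d^{π}}[D_TV(π'(·|s), π(·|s))]. -/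
/-- Occupancy measure difference bound: for occupancies `d` of `π` and `d'` of `π'`
(characterized by their fixed-point equations) on a finite MDP with `γ ∈ [0,1)`,
`‖d' - d‖₁ ≤ (2γ/(1-γ)) * E_{s∼d}[D_TV(π'(·|s), π(·|s))]`. -/
theorem occupancy_difference_bound {S A : Type*} [Fintype S] [Fintype A]
    (P : S → A → S → ℝ) (γ : ℝ) (μ : S → ℝ)
    (π π' : S → A → ℝ) (d d' : S → ℝ)
    (hγ0 : 0 ≤ γ) (hγ1 : γ < 1)
    (hP0 : ∀ s a s', 0 ≤ P s a s') (hP1 : ∀ s a, ∑ s', P s a s' = 1)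
    (hμ0 : ∀ s, 0 ≤ μ s) (hμ1 : ∑ s, μ s = 1)
    (hπ0 : ∀ s a, 0 ≤ π s a) (hπ1 : ∀ s, ∑ a, π s a = 1)
    (hπ'0 : ∀ s a, 0 ≤ π' s a) (hπ'1 : ∀ s, ∑ a, π' s a = 1)
    (hd : ∀ s, d s = (1 - γ) * μ s
        + γ * ∑ s'', ∑ a, d s'' * π s'' a * P s'' a s)
    (hd' : ∀ s, d' s = (1 - γ) * μ s
        + γ * ∑ s'', ∑ a, d' s'' * π' s'' a * P s'' a s)
    (hd0 : ∀ s, 0 ≤ d s) (hd'0 : ∀ s, 0 ≤ d' s) :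
    ∑ s, |d' s - d s| ≤
      (2 * γ / (1 - γ)) * ∑ s, d s * ((1 / 2) * ∑ a, |π' s a - π s a|) := by
  have h1γ : (0:ℝ) < 1 - γ := by linarith
  set X := ∑ s, |d' s - d s| with hX
  set Y := ∑ s, d s * ∑ a, |π' s a - π s a| with hY
  have key : X ≤ γ * X + γ * Y := by
    have hstep : ∀ s, |d' s - d s| ≤
        γ * ∑ s'', ∑ a, |d' s'' * π' s'' a - d s'' * π s'' a| * P s'' a s := by
      intro s
      have heq : d' s - d s =
          γ * ∑ s'', ∑ a, (d' s'' * π' s'' a - d s'' * π s'' a) * P s'' a s := by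
        have hsub : d' s - d s =
            γ * ((∑ s'', ∑ a, d' s'' * π' s'' a * P s'' a s)
              - (∑ s'', ∑ a, d s'' * π s'' a * P s'' a s)) := by
          rw [hd s, hd' s]; ring
        rw [hsub]
        congr 1
        rw [← Finset.sum_sub_distrib]
        refine Finset.sum_congr rfl fun s'' _ => ?_
        rw [← Finset.sum_sub_distrib]
        refine Finset.sum_congr rfl fun a _ => ?_
        ring
      calc |d' s - d s|
          = γ * |∑ s'', ∑ a, (d' s'' * π' s'' a - d s'' * π s'' a) * P s'' a s| := by
            rw [heq, abs_mul, abs_of_nonneg hγ0]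
        _ ≤ γ * ∑ s'', ∑ a, |d' s'' * π' s'' a - d s'' * π s'' a| * P s'' a s := by
            apply mul_le_mul_of_nonneg_left _ hγ0
            calc |∑ s'', ∑ a, (d' s'' * π' s'' a - d s'' * π s'' a) * P s'' a s|
                ≤ ∑ s'', |∑ a, (d' s'' * π' s'' a - d s'' * π s'' a) * P s'' a s| :=
                  Finset.abs_sum_le_sum_abs _ _
              _ ≤ ∑ s'', ∑ a, |d' s'' * π' s'' a - d s'' * π s'' a| * P s'' a s := by
                  refine Finset.sum_le_sum fun s'' _ => ?_
                  calc |∑ a, (d' s'' * π' s'' a - d s'' * π s'' a) * P s'' a s|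
                      ≤ ∑ a, |(d' s'' * π' s'' a - d s'' * π s'' a) * P s'' a s| :=
                        Finset.abs_sum_le_sum_abs _ _
                    _ = ∑ a, |d' s'' * π' s'' a - d s'' * π s'' a| * P s'' a s := by
                        refine Finset.sum_congr rfl fun a _ => ?_
                        rw [abs_mul, abs_of_nonneg (hP0 s'' a s)]
    calc X ≤ ∑ s, γ * ∑ s'', ∑ a, |d' s'' * π' s'' a - d s'' * π s'' a| * P s'' a s :=
          Finset.sum_le_sum fun s _ => hstep s
      _ = γ * ∑ s'', ∑ a, |d' s'' * π' s'' a - d s'' * π s'' a| := by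
          rw [← Finset.mul_sum, Finset.sum_comm]
          congr 1
          refine Finset.sum_congr rfl fun s'' _ => ?_
          rw [Finset.sum_comm]
          refine Finset.sum_congr rfl fun a _ => ?_
          rw [← Finset.mul_sum, hP1 s'' a, mul_one]
      _ ≤ γ * (X + Y) := by
          apply mul_le_mul_of_nonneg_left _ hγ0
          rw [hX, hY, ← Finset.sum_add_distrib]
          refine Finset.sum_le_sum fun s'' _ => ?_
          calc (∑ a, |d' s'' * π' s'' a - d s'' * π s'' a|)
              ≤ ∑ a, (|d' s'' - d s''| * π' s'' a + d s'' * |π' s'' a - π s'' a|) := by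
                refine Finset.sum_le_sum fun a _ => ?_
                have : d' s'' * π' s'' a - d s'' * π s'' a
                    = (d' s'' - d s'') * π' s'' a + d s'' * (π' s'' a - π s'' a) := by ring
                rw [this]
                calc |(d' s'' - d s'') * π' s'' a + d s'' * (π' s'' a - π s'' a)|
                    ≤ |(d' s'' - d s'') * π' s'' a| + |d s'' * (π' s'' a - π s'' a)| :=
                      abs_add_le _ _
                  _ = |d' s'' - d s''| * π' s'' a + d s'' * |π' s'' a - π s'' a| := by
                      rw [abs_mul, abs_mul, abs_of_nonneg (hπ'0 s'' a),
                        abs_of_nonneg (hd0 s'')]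
            _ = |d' s'' - d s''| + d s'' * ∑ a, |π' s'' a - π s'' a| := by
                rw [Finset.sum_add_distrib, ← Finset.mul_sum, ← Finset.mul_sum, hπ'1 s'']
                ring
      _ = γ * X + γ * Y := by ring
  have hgoal : (2 * γ / (1 - γ)) * ∑ s, d s * ((1 / 2) * ∑ a, |π' s a - π s a|)
      = γ / (1 - γ) * Y := by
    rw [hY, Finset.mul_sum, Finset.mul_sum]
    refine Finset.sum_congr rfl fun s _ => ?_
    field_simp
  rw [hgoal]
  rw [div_mul_eq_mul_div, le_div_iff₀ h1γ]
  nlinarith [key]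
end

section
/- Plasticity bound (Theorem 1, second part): let π_old, π_new be policies on a finite MDP with discount γ ∈ [0,1). Let M = sup over state-action pairs visited by π_new of |A^{π_old}(s,a)| and D = sqrt(2·E_{s∼d^{π_new}}[D_KL(π_new(·|s)‖π_old(·|s))]). Then J(π_new) − J(π_old) ≤ (1/(1−γ))·M·D. -/
open Real Finset

/-- `(x+1) log x - 2(x-1)` is monotone on `(0,∞)`. -/
lemma F_mono : MonotoneOn (fun y : ℝ => (y+1) * Real.log y - 2*(y-1)) (Set.Ioi 0) := by
  have hder : ∀ x ∈ Set.Ioi (0:ℝ), HasDerivAt (fun y : ℝ => (y+1) * Real.log y - 2*(y-1))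
      (Real.log x + (x+1) * x⁻¹ - 2) x := by
    intro x hx
    have hx0 : (0:ℝ) < x := hx
    have h1 : HasDerivAt (fun y : ℝ => (y+1) * Real.log y)
        (1 * Real.log x + (x+1) * x⁻¹) x :=
      (((hasDerivAt_id x).add_const 1)).mul (Real.hasDerivAt_log hx0.ne')
    have h2 : HasDerivAt (fun y : ℝ => 2*(y-1)) 2 x := by
      simpa using ((hasDerivAt_id x).sub_const 1).const_mul 2
    exact (h1.sub h2).congr_deriv (by ring)
  apply monotoneOn_of_deriv_nonneg (convex_Ioi 0)
  · exact fun x hx => ((hder x hx).continuousAt.continuousWithinAt)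
  · intro x hx; rw [interior_Ioi] at hx
    exact ((hder x hx).differentiableAt.differentiableWithinAt)
  · intro x hx
    rw [interior_Ioi] at hx
    rw [(hder x hx).deriv]
    have hx0 : (0:ℝ) < x := hx
    have := Real.one_sub_inv_le_log_of_pos hx0
    have hxx : (x+1) * x⁻¹ = 1 + x⁻¹ := by field_simp
    nlinarith

lemma G_hasDeriv {x : ℝ} (hx : 0 < x) :
    HasDerivAt (fun y : ℝ => (2*y+4)*(y*Real.log y - y + 1) - 3*(y-1)^2)
      (4*((x+1) * Real.log x - 2*(x-1))) x := by
  have h1 : HasDerivAt (fun y : ℝ => y * Real.log y) (1 * Real.log x + x * x⁻¹) x :=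
    (hasDerivAt_id x).mul (Real.hasDerivAt_log hx.ne')
  have h2 : HasDerivAt (fun y : ℝ => y*Real.log y - y + 1) (1 * Real.log x + x * x⁻¹ - 1) x :=
    (h1.sub (hasDerivAt_id x)).add_const 1
  have h3 : HasDerivAt (fun y : ℝ => 2*y+4) 2 x := by
    simpa using ((hasDerivAt_id x).const_mul 2).add_const 4
  have h4 := h3.mul h2
  have h5 : HasDerivAt (fun y : ℝ => 3*(y-1)^2) (3*(2*(x-1))) x := by
    have := (((hasDerivAt_id x).sub_const 1).pow 2).const_mul 3
    simpa using this
  have h6 := h4.sub h5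
  refine h6.congr_deriv ?_
  have : x * x⁻¹ = 1 := mul_inv_cancel₀ hx.ne'
  rw [this]; ring

/-- Key pointwise inequality for Pinsker. -/
lemma key_pointwise (x : ℝ) (hx : 0 ≤ x) :
    3*(x-1)^2 ≤ (2*x+4)*(x*Real.log x - x + 1) := by
  rcases eq_or_lt_of_le hx with h | hx0
  · simp [← h]; norm_num
  set G : ℝ → ℝ := fun y => (2*y+4)*(y*Real.log y - y + 1) - 3*(y-1)^2 with hG
  have hG1 : G 1 = 0 := by simp [hG]
  have hcont : ∀ y ∈ Set.Ioi (0:ℝ), ContinuousAt G y := fun y hy =>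
    (G_hasDeriv hy).continuousAt
  have hmain : 0 ≤ G x := by
    rcases le_or_gt 1 x with h1 | h1
    · -- monotone on [1, x]
      have hmono : MonotoneOn G (Set.Icc 1 x) := by
        apply monotoneOn_of_deriv_nonneg (convex_Icc 1 x)
        · exact fun y hy => (hcont y (lt_of_lt_of_le one_pos hy.1)).continuousWithinAt
        · intro y hy; rw [interior_Icc] at hy
          exact (G_hasDeriv (lt_trans one_pos hy.1)).differentiableAt.differentiableWithinAt
        · intro y hy
          rw [interior_Icc] at hy
          have hy0 : (0:ℝ) < y := lt_trans one_pos hy.1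
          rw [(G_hasDeriv hy0).deriv]
          have := F_mono (Set.mem_Ioi.2 one_pos) (Set.mem_Ioi.2 hy0) hy.1.le
          simp at this
          nlinarith
      have := hmono (Set.left_mem_Icc.2 h1) (Set.right_mem_Icc.2 h1) h1
      rw [hG1] at this; exact this
    · -- antitone on [x, 1]
      have hanti : AntitoneOn G (Set.Icc x 1) := by
        apply antitoneOn_of_deriv_nonpos (convex_Icc x 1)
        · exact fun y hy => (hcont y (lt_of_lt_of_le hx0 hy.1)).continuousWithinAt
        · intro y hy; rw [interior_Icc] at hy
          exact (G_hasDeriv (lt_trans hx0 hy.1)).differentiableAt.differentiableWithinAt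
        · intro y hy
          rw [interior_Icc] at hy
          have hy0 : (0:ℝ) < y := lt_trans hx0 hy.1
          rw [(G_hasDeriv hy0).deriv]
          have := F_mono (Set.mem_Ioi.2 hy0) (Set.mem_Ioi.2 one_pos) hy.2.le
          simp at this
          nlinarith
      have := hanti (Set.left_mem_Icc.2 h1.le) (Set.right_mem_Icc.2 h1.le) h1.le
      rw [hG1] at this; exact this
  simpa [hG] using hmain

/-- Pinsker's inequality for finite distributions. -/
lemma pinsker {A : Type*} [Fintype A] (p q : A → ℝ)
    (hp0 : ∀ a, 0 ≤ p a) (hq0 : ∀ a, 0 ≤ q a)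
    (hp1 : ∑ a, p a = 1) (hq1 : ∑ a, q a = 1)
    (habs : ∀ a, 0 < p a → 0 < q a) :
    (∑ a, |p a - q a|) ^ 2 ≤ 2 * ∑ a, p a * Real.log (p a / q a) := by
  classical
  set t : Finset A := Finset.univ.filter (fun a => 0 < q a) with ht
  have hout : ∀ a, a ∉ t → p a = 0 ∧ q a = 0 := by
    intro a ha
    have hq : ¬ (0 < q a) := by simpa [ht] using ha
    have hqz : q a = 0 := le_antisymm (not_lt.1 hq) (hq0 a)
    have hpz : p a = 0 := by
      by_contra h
      exact hq (habs a (lt_of_le_of_ne (hp0 a) (Ne.symm h)))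
    exact ⟨hpz, hqz⟩
  have hsum_p : ∑ a ∈ t, p a = 1 := by
    rw [← hp1]; exact Finset.sum_subset (Finset.subset_univ t)
      (fun a _ ha => (hout a ha).1)
  have hsum_q : ∑ a ∈ t, q a = 1 := by
    rw [← hq1]; exact Finset.sum_subset (Finset.subset_univ t)
      (fun a _ ha => (hout a ha).2)
  have htv : ∑ a, |p a - q a| = ∑ a ∈ t, |p a - q a| :=
    (Finset.sum_subset (Finset.subset_univ t)
      (fun a _ ha => by rw [(hout a ha).1, (hout a ha).2]; simp)).symm
  have hkl : ∑ a, p a * Real.log (p a / q a) = ∑ a ∈ t, p a * Real.log (p a / q a) :=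
    (Finset.sum_subset (Finset.subset_univ t)
      (fun a _ ha => by rw [(hout a ha).1]; simp)).symm
  -- weights
  set w : A → ℝ := fun a => (2 * p a + 4 * q a) / 3 with hw
  have hwpos : ∀ a ∈ t, 0 < w a := by
    intro a ha
    have hq : 0 < q a := by simpa [ht] using ha
    have := hp0 a
    simp only [hw]; positivity
  have hsum_w : ∑ a ∈ t, w a = 2 := by
    simp only [hw]
    rw [← Finset.sum_div, Finset.sum_add_distrib, ← Finset.mul_sum, ← Finset.mul_sum,
      hsum_p, hsum_q]
    norm_num
  -- pointwise bound
  have hpt : ∀ a ∈ t, |p a - q a| ^ 2 / w a ≤ p a * Real.log (p a / q a) - p a + q a := by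
    intro a ha
    have hq : 0 < q a := by simpa [ht] using ha
    set x := p a / q a with hx
    have hx0 : 0 ≤ x := div_nonneg (hp0 a) hq.le
    have hkey := key_pointwise x hx0
    have hpa : p a = q a * x := by rw [hx, mul_div_assoc', mul_div_cancel_left₀ _ hq.ne']
    have hwa : w a = q a * (2*x+4) / 3 := by
      simp only [hw]; rw [hpa]; ring
    have h24 : 0 < 2*x+4 := by linarith
    rw [sq_abs, hpa, hwa]
    rw [div_le_iff₀ (by positivity)]
    nlinarith [sq_nonneg (q a), mul_le_mul_of_nonneg_left hkey (sq_nonneg (q a)),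
      mul_pos hq hq, hq.le, mul_le_mul_of_nonneg_left hkey hq.le]
  -- Cauchy-Schwarz (Titu)
  have hCS := Finset.sq_sum_div_le_sum_sq_div t (fun a => |p a - q a|) hwpos
  rw [hsum_w] at hCS
  have hsum_pt : ∑ a ∈ t, |p a - q a| ^ 2 / w a ≤
      ∑ a ∈ t, (p a * Real.log (p a / q a) - p a + q a) := Finset.sum_le_sum hpt
  have hsplit : ∑ a ∈ t, (p a * Real.log (p a / q a) - p a + q a)
      = ∑ a ∈ t, p a * Real.log (p a / q a) := by
    rw [Finset.sum_add_distrib, Finset.sum_sub_distrib, hsum_p, hsum_q]; ring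
  rw [hsplit] at hsum_pt
  rw [htv, hkl]
  have h2 : (∑ a ∈ t, |p a - q a|) ^ 2 / 2 ≤ ∑ a ∈ t, p a * Real.log (p a / q a) :=
    le_trans hCS hsum_pt
  linarith

/-- Plasticity bound (Theorem 1, second part). On a finite MDP with discount
`γ ∈ [0,1)`, let `V` (resp. `V'`) be the value function of `π_old` (resp. `π_new`)
and `d'` the normalized discounted occupancy of `π_new`. With
`A(s,a) = r s a + γ * ∑ s', P s a s' * V s' - V s` the advantage of `π_old`,
if `M` bounds `|A(s,a)|` on the support of `d'`, and
`D = sqrt(2 * E_{s∼d'}[D_KL(π_new(·|s) ‖ π_old(·|s))])`, then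
`J(π_new) - J(π_old) ≤ (1/(1-γ)) * M * D`. -/
theorem plasticity_bound {S A : Type*} [Fintype S] [Fintype A]
    (P : S → A → S → ℝ) (r : S → A → ℝ) (γ : ℝ) (μ : S → ℝ)
    (πold πnew : S → A → ℝ) (V V' d' : S → ℝ) (M : ℝ)
    (hγ0 : 0 ≤ γ) (hγ1 : γ < 1) (hM : 0 ≤ M)
    (hP0 : ∀ s a s', 0 ≤ P s a s') (hP1 : ∀ s a, ∑ s', P s a s' = 1)
    (hμ0 : ∀ s, 0 ≤ μ s) (hμ1 : ∑ s, μ s = 1)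
    (ho0 : ∀ s a, 0 ≤ πold s a) (ho1 : ∀ s, ∑ a, πold s a = 1)
    (hn0 : ∀ s a, 0 ≤ πnew s a) (hn1 : ∀ s, ∑ a, πnew s a = 1)
    (hV : ∀ s, V s = ∑ a, πold s a * (r s a + γ * ∑ s', P s a s' * V s'))
    (hV' : ∀ s, V' s = ∑ a, πnew s a * (r s a + γ * ∑ s', P s a s' * V' s'))
    (hd' : ∀ s, d' s = (1 - γ) * μ s
        + γ * ∑ s'', ∑ a, d' s'' * πnew s'' a * P s'' a s)
    (hd'0 : ∀ s, 0 ≤ d' s)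
    (habs : ∀ s a, 0 < πnew s a → 0 < πold s a)
    (hMbound : ∀ s a, 0 < d' s →
        |r s a + γ * (∑ s', P s a s' * V s') - V s| ≤ M) :
    (∑ s, μ s * V' s) - (∑ s, μ s * V s) ≤
      (1 / (1 - γ)) * M *
        Real.sqrt (2 * ∑ s, d' s *
          ∑ a, πnew s a * Real.log (πnew s a / πold s a)) := by
  classical
  have h1γ : (0:ℝ) < 1 - γ := by linarith
  -- abbreviations (as plain functions)
  let KL : S → ℝ := fun s => ∑ a, πnew s a * Real.log (πnew s a / πold s a)
  let f : S → ℝ := fun s => ∑ a, πnew s a * (r s a + γ * (∑ s', P s a s' * V s') - V s)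
  let W : S → ℝ := fun s => V' s - V s
  -- Bellman residual identity
  have hfs : ∀ s, f s
      = W s - γ * ∑ a, πnew s a * ∑ s', P s a s' * W s' := by
    intro s
    have e1 : f s = (∑ a, πnew s a * (r s a + γ * ∑ s', P s a s' * V s')) - V s := by
      show (∑ a, πnew s a * (r s a + γ * (∑ s', P s a s' * V s') - V s)) = _
      simp only [mul_sub]
      rw [Finset.sum_sub_distrib, ← Finset.sum_mul, hn1, one_mul]
    have e2 : ∀ a, (∑ s', P s a s' * W s')
        = (∑ s', P s a s' * V' s') - (∑ s', P s a s' * V s') := by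
      intro a
      show (∑ s', P s a s' * (V' s' - V s')) = _
      simp only [mul_sub, Finset.sum_sub_distrib]
    have e3 : ∑ a, πnew s a * ((∑ s', P s a s' * V' s') - (∑ s', P s a s' * V s'))
        = (∑ a, πnew s a * (∑ s', P s a s' * V' s'))
          - (∑ a, πnew s a * (∑ s', P s a s' * V s')) := by
      simp only [mul_sub, Finset.sum_sub_distrib]
    have e4 : V' s = (∑ a, πnew s a * r s a)
        + γ * ∑ a, πnew s a * (∑ s', P s a s' * V' s') := by
      rw [hV' s]
      simp only [mul_add, Finset.sum_add_distrib, Finset.mul_sum]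
      congr 1
      apply Finset.sum_congr rfl; intro a _
      apply Finset.sum_congr rfl; intro x _; ring
    have e5 : (∑ a, πnew s a * (r s a + γ * ∑ s', P s a s' * V s'))
        = (∑ a, πnew s a * r s a)
          + γ * ∑ a, πnew s a * (∑ s', P s a s' * V s') := by
      simp only [mul_add, Finset.sum_add_distrib, Finset.mul_sum]
      congr 1
      apply Finset.sum_congr rfl; intro a _
      apply Finset.sum_congr rfl; intro x _; ring
    simp only [e2, e3]
    rw [e1, e5]
    show _ = (V' s - V s) - γ * _
    rw [e4]
    ring
  -- occupancy identity
  have hocc : ∀ s', γ * (∑ s, ∑ a, d' s * πnew s a * P s a s')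
      = d' s' - (1-γ) * μ s' := by
    intro s'
    have := hd' s'
    linarith
  -- performance difference lemma
  have hswap : ∑ s, d' s * (γ * ∑ a, πnew s a * ∑ s', P s a s' * W s')
      = ∑ s', (d' s' - (1-γ) * μ s') * W s' := by
    calc ∑ s, d' s * (γ * ∑ a, πnew s a * ∑ s', P s a s' * W s')
        = ∑ s, ∑ a, ∑ s', γ * (d' s * πnew s a * P s a s') * W s' := by
          apply Finset.sum_congr rfl; intro s _
          simp only [Finset.mul_sum]
          apply Finset.sum_congr rfl; intro a _
          apply Finset.sum_congr rfl; intro s'' _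
          ring
      _ = ∑ s, ∑ s', ∑ a, γ * (d' s * πnew s a * P s a s') * W s' :=
          Finset.sum_congr rfl (fun s _ => Finset.sum_comm)
      _ = ∑ s', ∑ s, ∑ a, γ * (d' s * πnew s a * P s a s') * W s' :=
          Finset.sum_comm
      _ = ∑ s', (γ * (∑ s, ∑ a, d' s * πnew s a * P s a s')) * W s' := by
          apply Finset.sum_congr rfl; intro s' _
          simp only [Finset.mul_sum, Finset.sum_mul]
      _ = ∑ s', (d' s' - (1-γ) * μ s') * W s' := by
          apply Finset.sum_congr rfl; intro s' _
          rw [hocc]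
  have hPDL : ∑ s, d' s * f s = (1-γ) * ∑ s, μ s * W s := by
    calc ∑ s, d' s * f s
        = ∑ s, (d' s * W s - d' s * (γ * ∑ a, πnew s a * ∑ s', P s a s' * W s')) := by
          apply Finset.sum_congr rfl; intro s _
          rw [hfs s]; ring
      _ = (∑ s, d' s * W s) - ∑ s, d' s * (γ * ∑ a, πnew s a * ∑ s', P s a s' * W s') :=
          Finset.sum_sub_distrib _ _
      _ = (∑ s, d' s * W s) - ∑ s', (d' s' - (1-γ) * μ s') * W s' := by rw [hswap]
      _ = (1-γ) * ∑ s, μ s * W s := by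
          rw [Finset.mul_sum, ← Finset.sum_sub_distrib]
          apply Finset.sum_congr rfl; intro s _
          ring
  -- zero-mean advantage under old policy
  have hold : ∀ s, ∑ a, πold s a * (r s a + γ * (∑ s', P s a s' * V s') - V s) = 0 := by
    intro s
    simp only [mul_sub]
    rw [Finset.sum_sub_distrib, ← Finset.sum_mul, ho1, one_mul, ← hV s, sub_self]
  -- KL nonnegativity
  have hKL0 : ∀ s, 0 ≤ KL s := by
    intro s
    have hpin := pinsker (πnew s) (πold s) (hn0 s) (ho0 s) (hn1 s) (ho1 s) (habs s)
    nlinarith [sq_nonneg (∑ a, |πnew s a - πold s a|)]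
  -- per-state bound
  have hstep : ∀ s, 0 < d' s → f s ≤ M * Real.sqrt (2 * KL s) := by
    intro s hds
    have hdiff : f s = ∑ a, (πnew s a - πold s a)
        * (r s a + γ * (∑ s', P s a s' * V s') - V s) := by
      show (∑ a, πnew s a * (r s a + γ * (∑ s', P s a s' * V s') - V s)) = _
      simp only [sub_mul]
      rw [Finset.sum_sub_distrib, hold s, sub_zero]
    have htv : f s ≤ M * ∑ a, |πnew s a - πold s a| := by
      rw [hdiff, Finset.mul_sum]
      apply Finset.sum_le_sum
      intro a _
      calc (πnew s a - πold s a) * (r s a + γ * (∑ s', P s a s' * V s') - V s)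
          ≤ |(πnew s a - πold s a) * (r s a + γ * (∑ s', P s a s' * V s') - V s)| :=
            le_abs_self _
        _ = |πnew s a - πold s a| * |r s a + γ * (∑ s', P s a s' * V s') - V s| :=
            abs_mul _ _
        _ ≤ |πnew s a - πold s a| * M :=
            mul_le_mul_of_nonneg_left (hMbound s a hds) (abs_nonneg _)
        _ = M * |πnew s a - πold s a| := mul_comm _ _
    have hpin := pinsker (πnew s) (πold s) (hn0 s) (ho0 s) (hn1 s) (ho1 s) (habs s)
    have htv2 : ∑ a, |πnew s a - πold s a| ≤ Real.sqrt (2 * KL s) := by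
      have h0 : (0:ℝ) ≤ ∑ a, |πnew s a - πold s a| :=
        Finset.sum_nonneg (fun a _ => abs_nonneg _)
      calc ∑ a, |πnew s a - πold s a|
          = Real.sqrt ((∑ a, |πnew s a - πold s a|)^2) := (Real.sqrt_sq h0).symm
        _ ≤ Real.sqrt (2 * KL s) := Real.sqrt_le_sqrt hpin
    calc f s ≤ M * ∑ a, |πnew s a - πold s a| := htv
      _ ≤ M * Real.sqrt (2 * KL s) := mul_le_mul_of_nonneg_left htv2 hM
  -- sum of occupancy is 1
  have hd'sum : ∑ s, d' s = 1 := by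
    have h : ∑ s, d' s = (1-γ) + γ * ∑ s, ∑ s'', ∑ a, d' s'' * πnew s'' a * P s'' a s := by
      calc ∑ s, d' s = ∑ s, ((1-γ) * μ s + γ * ∑ s'', ∑ a, d' s'' * πnew s'' a * P s'' a s) :=
            Finset.sum_congr rfl (fun s _ => hd' s)
        _ = (1-γ) * ∑ s, μ s + γ * ∑ s, ∑ s'', ∑ a, d' s'' * πnew s'' a * P s'' a s := by
            rw [Finset.sum_add_distrib, ← Finset.mul_sum, ← Finset.mul_sum]
        _ = _ := by rw [hμ1, mul_one]
    have h2 : ∑ s, ∑ s'', ∑ a, d' s'' * πnew s'' a * P s'' a s = ∑ s'', d' s'' := by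
      rw [Finset.sum_comm]
      apply Finset.sum_congr rfl; intro s'' _
      rw [Finset.sum_comm]
      calc ∑ a, ∑ s, d' s'' * πnew s'' a * P s'' a s
          = ∑ a, d' s'' * πnew s'' a := by
            apply Finset.sum_congr rfl; intro a _
            rw [← Finset.mul_sum, hP1, mul_one]
        _ = d' s'' := by rw [← Finset.mul_sum, hn1, mul_one]
    rw [h2] at h
    have h3 : (1-γ) * ∑ s, d' s = (1-γ) := by linarith
    have := mul_left_cancel₀ h1γ.ne' (h3.trans (mul_one (1-γ)).symm)
    exact this
  -- sum bound
  have hsum : ∑ s, d' s * f s ≤ M * ∑ s, d' s * Real.sqrt (2 * KL s) := by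
    rw [Finset.mul_sum]
    apply Finset.sum_le_sum
    intro s _
    rcases (hd'0 s).eq_or_lt with h | h
    · rw [← h]; simp
    · calc d' s * f s ≤ d' s * (M * Real.sqrt (2 * KL s)) :=
          mul_le_mul_of_nonneg_left (hstep s h) (hd'0 s)
        _ = M * (d' s * Real.sqrt (2 * KL s)) := by ring
  -- Jensen via Cauchy-Schwarz
  have hjensen : ∑ s, d' s * Real.sqrt (2 * KL s) ≤ Real.sqrt (2 * ∑ s, d' s * KL s) := by
    have hg0 : ∀ s, 0 ≤ d' s * (2 * KL s) :=
      fun s => mul_nonneg (hd'0 s) (by have := hKL0 s; linarith)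
    have hcs := Real.sum_sqrt_mul_sqrt_le (Finset.univ : Finset S)
      (f := d') (g := fun s => d' s * (2 * KL s)) hd'0 hg0
    have hlhs : ∀ s, Real.sqrt (d' s) * Real.sqrt (d' s * (2 * KL s))
        = d' s * Real.sqrt (2 * KL s) := by
      intro s
      rw [Real.sqrt_mul (hd'0 s), ← mul_assoc, Real.mul_self_sqrt (hd'0 s)]
    have hrhs : Real.sqrt (∑ s, d' s) * Real.sqrt (∑ s, d' s * (2 * KL s))
        = Real.sqrt (2 * ∑ s, d' s * KL s) := by
      rw [hd'sum, Real.sqrt_one, one_mul]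
      congr 1
      rw [Finset.mul_sum]
      apply Finset.sum_congr rfl; intro s _; ring
    calc ∑ s, d' s * Real.sqrt (2 * KL s)
        = ∑ s, Real.sqrt (d' s) * Real.sqrt (d' s * (2 * KL s)) :=
          Finset.sum_congr rfl (fun s _ => (hlhs s).symm)
      _ ≤ Real.sqrt (∑ s, d' s) * Real.sqrt (∑ s, d' s * (2 * KL s)) := hcs
      _ = Real.sqrt (2 * ∑ s, d' s * KL s) := hrhs
  -- assemble
  have hW : (∑ s, μ s * V' s) - (∑ s, μ s * V s) = ∑ s, μ s * W s := by
    rw [← Finset.sum_sub_distrib]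
    apply Finset.sum_congr rfl; intro s _
    show _ = μ s * (V' s - V s)
    ring
  rw [hW]
  have hμW : ∑ s, μ s * W s = (1/(1-γ)) * ∑ s, d' s * f s := by
    rw [hPDL]
    field_simp
  rw [hμW]
  have hchain : ∑ s, d' s * f s ≤ M * Real.sqrt (2 * ∑ s, d' s * KL s) :=
    le_trans hsum (mul_le_mul_of_nonneg_left hjensen hM)
  calc (1/(1-γ)) * ∑ s, d' s * f s
      ≤ (1/(1-γ)) * (M * Real.sqrt (2 * ∑ s, d' s * KL s)) :=
        mul_le_mul_of_nonneg_left hchain (by positivity)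
    _ = (1/(1-γ)) * M * Real.sqrt (2 * ∑ s, d' s * KL s) := by ring
end
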